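/- arXiv:1409.2147 — 4 statements merged into one kernel-verified Lean document; each statement's English description precedes it below -/
import Mathlib

section
/- Let $a_1 > a_2$ and $b$ be real numbers, and let $u$ be a real number satisfying $|(u - a_1)(u - a_2) - b^2| < (a_1 - a_2)^2/4$. Set $\lambda = (a_1 - a_2)^{-2}[(u - a_1)(u - a_2) - b^2]$ and $\gamma = (\sqrt{1 + 4\lambda} - 1)/2$. Then either $u \ge \max\{a_1 - |\gamma|(a_1 - a_2),\ (1/2)[a_1 + a_2 + 2|b|]\}$, or $u \le \min\{a_2 + |\gamma|(a_1 - a_2),\ (1/2)[a_1 + a_2 - 2|b|]\}$. In either case, $a_2 - |\gamma|(a_1 - a_2) - |b| \le u \le a_1 + |\gamma|(a_1 - a_2) + |b|$. -/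
set_option maxHeartbeats 1000000 in
/-- Lemma 4.3 ("generalized quadratic inequality"): dichotomy for solutions of
`|(u - a₁)(u - a₂) - b²| < (a₁ - a₂)²/4`. -/
theorem quadratic_inequality_dichotomy (a1 a2 b u : ℝ) (hlt : a2 < a1)
    (h : |(u - a1) * (u - a2) - b ^ 2| < (a1 - a2) ^ 2 / 4) :
    let lam : ℝ := ((a1 - a2) ^ 2)⁻¹ * ((u - a1) * (u - a2) - b ^ 2)
    let gam : ℝ := (Real.sqrt (1 + 4 * lam) - 1) / 2
    (u ≥ max (a1 - |gam| * (a1 - a2)) ((a1 + a2 + 2 * |b|) / 2) ∨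
      u ≤ min (a2 + |gam| * (a1 - a2)) ((a1 + a2 - 2 * |b|) / 2)) ∧
    a2 - |gam| * (a1 - a2) - |b| ≤ u ∧ u ≤ a1 + |gam| * (a1 - a2) + |b| := by
  intro lam gam
  have hd0 : (0:ℝ) < a1 - a2 := by linarith
  have hd2 : (0:ℝ) < (a1 - a2) ^ 2 := by positivity
  have habs := abs_lt.mp h
  have hlamd : lam * (a1 - a2) ^ 2 = (u - a1) * (u - a2) - b ^ 2 := by
    show ((a1 - a2) ^ 2)⁻¹ * ((u - a1) * (u - a2) - b ^ 2) * (a1 - a2) ^ 2 = _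
    field_simp
  have h4 : 0 < 1 + 4 * lam := by nlinarith [habs.1]
  have hs0 : 0 ≤ Real.sqrt (1 + 4 * lam) := Real.sqrt_nonneg _
  have hs : Real.sqrt (1 + 4 * lam) ^ 2 = 1 + 4 * lam := Real.sq_sqrt h4.le
  have hg : (gam + 1/2) ^ 2 = lam + 1/4 := by
    show ((Real.sqrt (1 + 4 * lam) - 1) / 2 + 1/2) ^ 2 = _
    nlinarith [hs]
  have hg0 : 0 ≤ gam + 1/2 := by
    show 0 ≤ (Real.sqrt (1 + 4 * lam) - 1) / 2 + 1/2
    linarith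
  clear_value gam lam
  clear h habs hs hs0 h4
  have hc0 : 0 ≤ (a1 - a2) * (gam + 1/2) := mul_nonneg hd0.le hg0
  have key : (u - (a1 + a2)/2) ^ 2 = b ^ 2 + ((a1 - a2) * (gam + 1/2)) ^ 2 := by
    nlinarith [hg, hlamd]
  have hb0 : 0 ≤ |b| := abs_nonneg b
  have he0 : 0 ≤ |u - (a1 + a2)/2| := abs_nonneg _
  have hsb : |b| ^ 2 = b ^ 2 := sq_abs b
  have hse : |u - (a1 + a2)/2| ^ 2 = (u - (a1 + a2)/2) ^ 2 := sq_abs _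
  have heb : |b| ≤ |u - (a1 + a2)/2| := by nlinarith [key]
  have hec : (a1 - a2) * (gam + 1/2) ≤ |u - (a1 + a2)/2| := by nlinarith [key]
  have heu : |u - (a1 + a2)/2| ≤ |b| + (a1 - a2) * (gam + 1/2) := by nlinarith [key]
  have hga : -|gam| ≤ gam := neg_abs_le gam
  have hgb : gam ≤ |gam| := le_abs_self gam
  have hgn : 0 ≤ |gam| := abs_nonneg gam
  rcases le_or_gt ((a1 + a2)/2) u with hmu | hmu
  · have he : |u - (a1 + a2)/2| = u - (a1 + a2)/2 := abs_of_nonneg (by linarith)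
    rw [he] at heb hec heu
    refine ⟨Or.inl (max_le ?_ ?_), ?_, ?_⟩
    all_goals nlinarith
  · have he : |u - (a1 + a2)/2| = (a1 + a2)/2 - u := by
      rw [abs_of_nonpos (by linarith)]; ring
    rw [he] at heb hec heu
    refine ⟨Or.inr (le_min ?_ ?_), ?_, ?_⟩
    all_goals nlinarith
end

section
/- Let $f : (t_0 - \rho_0, t_0 + \rho_0) \to \mathbb{R}$ be $C^2$ with $f'' \ge \sigma_0 > 0$ and $\sup |f'| \le 1$ on the interval. Set $\sigma_1 = \min(\sigma_0, 1)$. If $f$ has two zeros $v_1 < v_2$ with $|v_i - t_0| < \rho_0/2$ for $i = 1, 2$, then $-f'(v_1) > \sigma_1^2 (v_2 - v_1)^2 / 256$ and $f'(v_2) > \sigma_1^2 (v_2 - v_1)^2 / 256$. -/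
/-!
Subtracting `σ₀ x² / 2` from `f` leaves a convex function `g`, since `g'' = f'' - σ₀ ≥ 0`.
Comparing the derivatives of `g` at the ends of a chord with the slope of the chord gives
`f'(x) + σ₀ (y - x) / 2 ≤ slope f x y ≤ f'(y) - σ₀ (y - x) / 2`, and the slope vanishes
between two zeros, so `-f'(v₁)` and `f'(v₂)` are at least `σ₀ (v₂ - v₁) / 2`. Finally
`|f'| ≤ 1` forces `σ₀ (v₂ - v₁) ≤ 2`, which makes the quadratic bound of the statement
weaker than this linear one.
-/

open Set

section StrongConvexity

variable {s : Set ℝ} {f : ℝ → ℝ} {σ : ℝ}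

lemma monotoneOn_deriv_sub_mul_of_le_deriv2 (hs : Convex ℝ s) (hso : IsOpen s)
    (hf' : DifferentiableOn ℝ (deriv f) s) (hσ : ∀ x ∈ s, σ ≤ deriv (deriv f) x) :
    MonotoneOn (fun x => deriv f x - σ * x) s := by
  intro x hx y hy hxy
  have := hs.mul_sub_le_image_sub_of_le_deriv hf'.continuousOn (by rwa [hso.interior_eq])
    (by rwa [hso.interior_eq]) x hx y hy hxy
  dsimp only
  linarith

lemma HasDerivAt.sub_half_mul_sq {f' x : ℝ} (hf : HasDerivAt f f' x) (σ : ℝ) :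
    HasDerivAt (fun x => f x - σ / 2 * x ^ 2) (f' - σ * x) x :=
  (hf.fun_sub ((hasDerivAt_pow 2 x).const_mul (σ / 2))).congr_deriv (by push_cast; ring)

lemma convexOn_sub_half_mul_sq_of_le_deriv2 (hs : Convex ℝ s) (hso : IsOpen s)
    (hf : DifferentiableOn ℝ f s) (hf' : DifferentiableOn ℝ (deriv f) s)
    (hσ : ∀ x ∈ s, σ ≤ deriv (deriv f) x) :
    ConvexOn ℝ s (fun x => f x - σ / 2 * x ^ 2) := by
  have hg : ∀ x ∈ s, HasDerivAt (fun x => f x - σ / 2 * x ^ 2) (deriv f x - σ * x) x :=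
    fun x hx => (hf.differentiableAt (hso.mem_nhds hx)).hasDerivAt.sub_half_mul_sq σ
  refine MonotoneOn.convexOn_of_deriv hs (fun x hx => (hg x hx).continuousAt.continuousWithinAt)
    ?_ ?_ <;> rw [hso.interior_eq]
  · exact fun x hx => (hg x hx).differentiableAt.differentiableWithinAt
  · exact (monotoneOn_deriv_sub_mul_of_le_deriv2 hs hso hf' hσ).congr
      fun x hx => (hg x hx).deriv.symm

variable {x y : ℝ}

lemma deriv_add_mul_le_slope_of_le_deriv2 (hs : Convex ℝ s) (hso : IsOpen s)
    (hf : DifferentiableOn ℝ f s) (hf' : DifferentiableOn ℝ (deriv f) s)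
    (hσ : ∀ x ∈ s, σ ≤ deriv (deriv f) x) (hx : x ∈ s) (hy : y ∈ s) (hxy : x < y) :
    deriv f x + σ * (y - x) / 2 ≤ slope f x y := by
  have := (convexOn_sub_half_mul_sq_of_le_deriv2 hs hso hf hf' hσ).le_slope_of_hasDerivAt
    hx hy hxy ((hf.differentiableAt (hso.mem_nhds hx)).hasDerivAt.sub_half_mul_sq σ)
  rw [slope_def_field] at this ⊢
  rw [le_div_iff₀ (sub_pos.mpr hxy)] at this ⊢
  nlinarith

lemma slope_le_deriv_sub_mul_of_le_deriv2 (hs : Convex ℝ s) (hso : IsOpen s)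
    (hf : DifferentiableOn ℝ f s) (hf' : DifferentiableOn ℝ (deriv f) s)
    (hσ : ∀ x ∈ s, σ ≤ deriv (deriv f) x) (hx : x ∈ s) (hy : y ∈ s) (hxy : x < y) :
    slope f x y ≤ deriv f y - σ * (y - x) / 2 := by
  have := (convexOn_sub_half_mul_sq_of_le_deriv2 hs hso hf hf' hσ).slope_le_of_hasDerivAt
    hx hy hxy ((hf.differentiableAt (hso.mem_nhds hy)).hasDerivAt.sub_half_mul_sq σ)
  rw [slope_def_field] at this ⊢
  rw [div_le_iff₀ (sub_pos.mpr hxy)] at this ⊢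
  nlinarith

end StrongConvexity

theorem deriv_lower_bound_at_two_zeros_general (t0 ρ0 σ0 : ℝ) (hσ0 : 0 < σ0)
    (f : ℝ → ℝ) (hf : ContDiffOn ℝ 2 f (Set.Ioo (t0 - ρ0) (t0 + ρ0)))
    (hconv : ∀ x ∈ Set.Ioo (t0 - ρ0) (t0 + ρ0), σ0 ≤ deriv (deriv f) x)
    (hder : ∀ x ∈ Set.Ioo (t0 - ρ0) (t0 + ρ0), |deriv f x| ≤ 1)
    (v1 v2 : ℝ) (hlt : v1 < v2)
    (hv1 : |v1 - t0| < ρ0 / 2) (hv2 : |v2 - t0| < ρ0 / 2)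
    (hz1 : f v1 = 0) (hz2 : f v2 = 0) :
    (min σ0 1) ^ 2 * (v2 - v1) ^ 2 / 256 < -deriv f v1 ∧
    (min σ0 1) ^ 2 * (v2 - v1) ^ 2 / 256 < deriv f v2 := by
  have hv1I : v1 ∈ Ioo (t0 - ρ0) (t0 + ρ0) := by
    constructor <;> linarith [abs_lt.mp hv1, abs_nonneg (v1 - t0)]
  have hv2I : v2 ∈ Ioo (t0 - ρ0) (t0 + ρ0) := by
    constructor <;> linarith [abs_lt.mp hv2, abs_nonneg (v2 - t0)]
  have hfd : DifferentiableOn ℝ f (Ioo (t0 - ρ0) (t0 + ρ0)) := hf.differentiableOn (by norm_num)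
  have hf'd : DifferentiableOn ℝ (deriv f) (Ioo (t0 - ρ0) (t0 + ρ0)) :=
    (hf.deriv_of_isOpen isOpen_Ioo (by norm_num)).differentiableOn one_ne_zero
  have hspread : σ0 * (v2 - v1) ≤ 2 := by
    have hmono : deriv f v1 - σ0 * v1 ≤ deriv f v2 - σ0 * v2 :=
      monotoneOn_deriv_sub_mul_of_le_deriv2 (convex_Ioo _ _) isOpen_Ioo hf'd hconv
        hv1I hv2I hlt.le
    linarith [abs_le.mp (hder v1 hv1I), abs_le.mp (hder v2 hv2I)]
  have hslope : slope f v1 v2 = 0 := by simp [slope_def_field, hz1, hz2]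
  have hleft := deriv_add_mul_le_slope_of_le_deriv2 (convex_Ioo _ _) isOpen_Ioo hfd hf'd hconv
    hv1I hv2I hlt
  have hright := slope_le_deriv_sub_mul_of_le_deriv2 (convex_Ioo _ _) isOpen_Ioo hfd hf'd hconv
    hv1I hv2I hlt
  have hquad : (min σ0 1) ^ 2 * (v2 - v1) ^ 2 / 256 < σ0 * (v2 - v1) / 2 := by
    have hd : 0 < v2 - v1 := sub_pos.mpr hlt
    have hmin : min σ0 1 * (v2 - v1) ≤ σ0 * (v2 - v1) :=
      mul_le_mul_of_nonneg_right (min_le_left _ _) hd.le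
    nlinarith [mul_pos (lt_min hσ0 one_pos) hd, mul_pos hσ0 hd]
  constructor <;> linarith

/-- Part (5) of the elementary calculus lemma: at two zeros `v₁ < v₂` of a strictly convex
function with `|f'| ≤ 1`, the derivative is quantitatively negative at `v₁` and positive
at `v₂`. -/
theorem deriv_lower_bound_at_two_zeros (t0 ρ0 σ0 : ℝ) (hρ0 : 0 < ρ0) (hσ0 : 0 < σ0)
    (f : ℝ → ℝ) (hf : ContDiffOn ℝ 2 f (Set.Ioo (t0 - ρ0) (t0 + ρ0)))
    (hconv : ∀ x ∈ Set.Ioo (t0 - ρ0) (t0 + ρ0), σ0 ≤ deriv (deriv f) x)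
    (hder : ∀ x ∈ Set.Ioo (t0 - ρ0) (t0 + ρ0), |deriv f x| ≤ 1)
    (v1 v2 : ℝ) (hlt : v1 < v2)
    (hv1 : |v1 - t0| < ρ0 / 2) (hv2 : |v2 - t0| < ρ0 / 2)
    (hz1 : f v1 = 0) (hz2 : f v2 = 0) :
    (min σ0 1) ^ 2 * (v2 - v1) ^ 2 / 256 < -deriv f v1 ∧
    (min σ0 1) ^ 2 * (v2 - v1) ^ 2 / 256 < deriv f v2 :=
  deriv_lower_bound_at_two_zeros_general t0 ρ0 σ0 hσ0 f hf hconv hder v1 v2 hlt hv1 hv2 hz1 hz2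
end

section
/- Let $\tilde\omega \in \mathbb{Q}^\nu$ with components $\tilde\omega_j = \ell_j/t_j$ ($\ell_j, t_j \in \mathbb{Z}$, $t_j \ne 0$), satisfying the Diophantine condition in a box: $|n \cdot \tilde\omega| \ge a_0 |n|^{-b_0}$ for all $n \in \mathbb{Z}^\nu$ with $0 < |n| \le \bar R_0$, where $0 < a_0 < 1$, $\nu < b_0 < \infty$, and $\bar R_0^{b_0} > \prod_j |t_j|$. Then for every coset $\mathfrak{n} \in \mathbb{Z}^\nu/\mathfrak{N}(\tilde\omega)$ with $\mathfrak{n} \ne [0]$ (where $\mathfrak{N}(\tilde\omega) = \{n : n\tilde\omega = 0\}$), one has $|\mathfrak{n}\tilde\omega| \ge a_0 |\mathfrak{n}|^{-b_0}$, where $|\mathfrak{n}| = \min\{|n| : n \in \mathfrak{n}\}$ and $\mathfrak{n}\tilde\omega$ denotes $n\tilde\omega$ for any representative $n$. -/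
/-- The Diophantine condition in a box for a rational frequency vector passes to the
quotient lattice: any minimal-norm representative `n` of a coset with `n·ω ≠ 0` satisfies
`|n·ω| ≥ a₀ |n|^{-b₀}`. -/
theorem diophantine_on_quotient_lattice (ν : ℕ) (ω : Fin ν → ℚ) (t : Fin ν → ℤ)
    (ht : ∀ j, t j ≠ 0) (hωt : ∀ j, ∃ l : ℤ, ω j = (l : ℚ) / (t j : ℚ))
    (a0 b0 R0 : ℝ) (ha0 : 0 < a0) (ha1 : a0 < 1) (hb0 : (ν : ℝ) < b0)
    (hR0 : 0 < R0) (hR0t : (∏ j, (|t j| : ℝ)) < R0 ^ b0)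
    (hdioph : ∀ n : Fin ν → ℤ, n ≠ 0 → ‖n‖ ≤ R0 →
      a0 * ‖n‖ ^ (-b0) ≤ |((∑ j, (n j : ℚ) * ω j : ℚ) : ℝ)|) :
    ∀ n : Fin ν → ℤ, (∑ j, (n j : ℚ) * ω j) ≠ 0 →
      (∀ n' : Fin ν → ℤ,
        (∑ j, (n' j : ℚ) * ω j) = (∑ j, (n j : ℚ) * ω j) → ‖n‖ ≤ ‖n'‖) →
      a0 * ‖n‖ ^ (-b0) ≤ |((∑ j, (n j : ℚ) * ω j : ℚ) : ℝ)| := by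
  intro n hq _hmin
  have hn0 : n ≠ 0 := by
    intro h0; apply hq; simp [h0]
  by_cases hcase : ‖n‖ ≤ R0
  · exact hdioph n hn0 hcase
  · push_neg at hcase
    set q : ℚ := ∑ j, (n j : ℚ) * ω j with hqdef
    choose l hl using hωt
    set T : ℤ := ∏ j, t j with hT
    have hTne : T ≠ 0 := Finset.prod_ne_zero_iff.mpr (fun j _ => ht j)
    set m : ℤ := ∑ j, n j * l j * (T / t j) with hm
    have hmq : (m : ℚ) = q * (T : ℚ) := by
      rw [hm, hqdef, Finset.sum_mul]
      push_cast
      refine Finset.sum_congr rfl (fun j _ => ?_)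
      have hdvd : t j ∣ T := Finset.dvd_prod_of_mem t (Finset.mem_univ j)
      rw [Int.cast_div_charZero hdvd, hl j]
      have htj : (t j : ℚ) ≠ 0 := Int.cast_ne_zero.mpr (ht j)
      field_simp
    have hmne : m ≠ 0 := by
      intro h0
      apply hq
      have : q * (T : ℚ) = 0 := by rw [← hmq, h0]; simp
      rcases mul_eq_zero.mp this with h | h
      · exact h
      · exact absurd (Int.cast_eq_zero.mp h) hTne
    -- real estimates
    have habsT : (0:ℝ) < (|T| : ℝ) := by
      exact_mod_cast abs_pos.mpr hTne
    have hq1 : (1:ℝ) / (|T| : ℝ) ≤ |((q : ℚ) : ℝ)| := by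
      rw [div_le_iff₀ habsT]
      have : |((q : ℚ) : ℝ)| * (|T| : ℝ) = |((m : ℚ) : ℝ)| := by
        rw [hmq]
        push_cast
        rw [abs_mul]
      rw [this]
      have : (1:ℤ) ≤ |m| := Int.one_le_abs hmne
      calc (1:ℝ) ≤ (|m| : ℝ) := by exact_mod_cast this
        _ = |((m : ℚ) : ℝ)| := by push_cast; ring
    have hTprod : |(T : ℝ)| = ∏ j, (|t j| : ℝ) := by
      rw [hT]
      push_cast
      exact Finset.abs_prod _ _
    have hb0pos : 0 < b0 := lt_of_le_of_lt (Nat.cast_nonneg ν) hb0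
    have hR0b : (0:ℝ) < R0 ^ b0 := Real.rpow_pos_of_pos hR0 b0
    have h2 : R0 ^ (-b0) < 1 / (|T| : ℝ) := by
      rw [Real.rpow_neg hR0.le, inv_eq_one_div]
      rw [div_lt_div_iff₀ hR0b habsT]
      have hlt : (|T| : ℝ) < R0 ^ b0 := hTprod ▸ hR0t
      nlinarith
    have hnpos : (0:ℝ) < ‖n‖ := lt_trans hR0 hcase
    have h3 : ‖n‖ ^ (-b0) ≤ R0 ^ (-b0) := by
      rw [Real.rpow_neg hR0.le, Real.rpow_neg hnpos.le]
      apply inv_anti₀ hR0b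
      exact (Real.rpow_le_rpow hR0.le hcase.le hb0pos.le)
    have h4 : a0 * ‖n‖ ^ (-b0) ≤ ‖n‖ ^ (-b0) := by
      nlinarith [Real.rpow_pos_of_pos hnpos (-b0)]
    calc a0 * ‖n‖ ^ (-b0) ≤ ‖n‖ ^ (-b0) := h4
      _ ≤ R0 ^ (-b0) := h3
      _ ≤ 1 / (|T| : ℝ) := h2.le
      _ ≤ |((q : ℚ) : ℝ)| := hq1
end

section
/- Let $\mathfrak{T}$ be an abelian group with norm-like function $|\cdot|$, $\xi : \mathfrak{T} \to \mathbb{R}$ additive with $|\xi(n)| \le |n|$ and the Diophantine condition $|\xi(n)| \ge a_0 |n|^{-b_0}$ for all $n \ne 0$ (constants $0 < a_0 < 1$, $b_0 > \nu$). Set $k_n = -\xi(n)/2$ for $n \ne 0$. Suppose $R^{(s)}$ is an increasing sequence of scales with $\log R^{(u)} = \beta_1 (\log R^{(u-1)})^2$, $\beta_1 = (32 b_0)^{-1}$, and $\log R^{(1)}$ sufficiently large so that $a_0 (48 R^{(u)})^{-b_0} > (R^{(u)})^{-2b_0}$ for all $u$. Let $\delta^{(u)}_0 = \exp(-(\log R^{(u)})^2)$.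 Suppose $k \in \mathbb{R}$ and $m_1 \ne 0$ satisfy $|k - k_{m_1}| < (\delta^{(s_1)}_0)^{3/4}$ where $12 R^{(s_1 - 1)} < |m_1| \le 12 R^{(s_1)}$. Then $|\xi(m_1)| > (\delta^{(s_1-1)}_0)^{1/16}$, $|k| > (\delta^{(s_1-1)}_0)^{1/16}/2$, and $\operatorname{sgn}(k) = -\operatorname{sgn}(\xi(m_1))$. -/
/-!
The Diophantine condition bounds `|ξ(m₁)|` from below by `a₀ (12 R^{(s₁)})^{-b₀}`, and the choice
of scales makes this exceed `4 (R^{(s₁)})^{-2b₀}`. The recursion `log R^{(s₁)} = β₁ (log R^{(s₁-1)})²`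
with `β₁ = (32 b₀)⁻¹` (for `s₁ = 1`, the definition of `δ₀^{(0)}`) says precisely that `(δ₀^{(s₁-1)})^{1/16} = (R^{(s₁)})^{-2b₀}`, while the
resonance window `(δ₀^{(s₁)})^{3/4} = exp (-¾ (log R^{(s₁)})²)` is much smaller still. So `k` lies
within a tiny distance of `-ξ(m₁)/2`, a number bounded away from `0`.
-/

open Real

lemma mul_mul_rpow_neg_le {c b y : ℝ} (hc : 1 ≤ c) (hb : 1 ≤ b) (hy : 0 ≤ y) :
    c * (c * y) ^ (-b) ≤ y ^ (-b) := by
  have hc0 : 0 ≤ c := zero_le_one.trans hc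
  have hcb : c * c ^ (-b) ≤ 1 := by
    calc c * c ^ (-b) = c ^ (1 - b) := by
          rw [sub_eq_add_neg, rpow_add (by linarith), rpow_one]
      _ ≤ 1 := rpow_le_one_of_one_le_of_nonpos hc (by linarith)
  calc c * (c * y) ^ (-b) = c * c ^ (-b) * y ^ (-b) := by rw [mul_rpow hc0 hy, mul_assoc]
    _ ≤ y ^ (-b) := mul_le_of_le_one_left (rpow_nonneg hy _) hcb

lemma four_mul_lt_of_diophantine {a b r N z D : ℝ} (ha : 0 < a) (hb : 1 ≤ b) (hN : 0 < N)
    (hNr : N ≤ 12 * r) (hdioph : a * N ^ (-b) ≤ z) (hD : D < a * (48 * r) ^ (-b)) :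
    4 * D < z := by
  have hr : 0 ≤ 12 * r := hN.le.trans hNr
  calc 4 * D < 4 * (a * (48 * r) ^ (-b)) := by linarith
    _ = a * (4 * (4 * (12 * r)) ^ (-b)) := by rw [show 48 * r = 4 * (12 * r) by ring]; ring
    _ ≤ a * (12 * r) ^ (-b) := by gcongr; exact mul_mul_rpow_neg_le (by norm_num) hb hr
    _ ≤ a * N ^ (-b) :=
      mul_le_mul_of_nonneg_left (rpow_le_rpow_of_nonpos hN hNr (by linarith)) ha.le
    _ ≤ z := hdioph

lemma rpow_neg_two_mul_eq_exp_neg_sq_rpow {R b x : ℝ} (hR : 0 < R) (hb : b ≠ 0)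
    (hlog : log R = (32 * b)⁻¹ * x ^ 2) : R ^ (-(2 * b)) = exp (-x ^ 2) ^ (1 / 16 : ℝ) := by
  rw [rpow_def_of_pos hR, ← exp_mul, hlog]
  congr 1
  field_simp
  ring

lemma exp_neg_sq_rpow_lt_rpow {R b : ℝ} (hR : 0 < R) (hb : 0 ≤ b) (hlog : 8 * b / 3 < log R) :
    exp (-log R ^ 2) ^ (3 / 4 : ℝ) < R ^ (-(2 * b)) := by
  rw [rpow_def_of_pos hR, ← exp_mul, exp_lt_exp]
  nlinarith

lemma half_abs_sub_lt_abs {k x ε : ℝ} (h : |k - -x / 2| < ε) : |x| / 2 - ε < |k| := by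
  have := abs_sub_abs_le_abs_sub (-x / 2) k
  rw [abs_sub_comm, abs_div, abs_neg, abs_two] at this
  linarith

lemma sign_eq_neg_sign_of_abs_sub_lt {k x ε : ℝ} (h : |k - -x / 2| < ε) (hx : 2 * ε ≤ |x|) :
    Real.sign k = -Real.sign x := by
  rw [abs_lt] at h
  rcases lt_trichotomy x 0 with hx0 | rfl | hx0
  · rw [abs_of_neg hx0] at hx
    rw [Real.sign_of_pos (by linarith), Real.sign_of_neg hx0, neg_neg]
  · simp only [abs_zero] at hx; linarith
  · rw [abs_of_pos hx0] at hx
    rw [Real.sign_of_neg (by linarith), Real.sign_of_pos hx0]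

lemma prev_delta_rpow_eq {R δ' : ℕ → ℝ} {b0 β1 : ℝ} (hb0 : b0 ≠ 0) (hβ1 : β1 = (32 * b0)⁻¹)
    (hRrec : ∀ u : ℕ, 2 ≤ u → Real.log (R u) = β1 * (Real.log (R (u - 1))) ^ 2)
    (hδ : ∀ u : ℕ, 1 ≤ u → δ' u = Real.exp (-(Real.log (R u)) ^ 2))
    (hδ0 : δ' 0 = (R 1) ^ (-β1⁻¹)) {s : ℕ} (hs : 1 ≤ s) (hR : 0 < R s) :
    δ' (s - 1) ^ (1 / 16 : ℝ) = R s ^ (-(2 * b0)) := by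
  rcases hs.eq_or_lt with rfl | hs2
  · rw [Nat.sub_self, hδ0, hβ1, inv_inv, ← rpow_mul hR.le]
    ring_nf
  · rw [hδ (s - 1) (by omega),
      rpow_neg_two_mul_eq_exp_neg_sq_rpow hR hb0 (hβ1 ▸ hRrec s hs2)]

theorem resonance_structure_general {T : Type*} [AddCommGroup T] (nrm : T → ℝ)
    (hpos : ∀ m : T, 0 ≤ nrm m) (hzero : ∀ m : T, nrm m = 0 ↔ m = 0)
    (ξ : T → ℝ)
    (a0 b0 ν : ℝ) (ha0 : 0 < a0) (hν : 1 < ν) (hb0 : ν < b0)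
    (hdioph : ∀ n : T, n ≠ 0 → a0 * nrm n ^ (-b0) ≤ |ξ n|)
    (β1 : ℝ) (hβ1 : β1 = (32 * b0)⁻¹)
    (R δ' : ℕ → ℝ)
    (hRmono : ∀ u : ℕ, 1 ≤ u → R u < R (u + 1))
    (hRrec : ∀ u : ℕ, 2 ≤ u → Real.log (R u) = β1 * (Real.log (R (u - 1))) ^ 2)
    (hR1a : 100 * a0⁻¹ ≤ R 1)
    (hR1big : 2 ^ 34 * β1⁻¹ ≤ Real.log (R 1))
    (hRbig : ∀ u : ℕ, 1 ≤ u → (R u) ^ (-(2 * b0)) < a0 * (48 * R u) ^ (-b0))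
    (hδ : ∀ u : ℕ, 1 ≤ u → δ' u = Real.exp (-(Real.log (R u)) ^ 2))
    (hδ0 : δ' 0 = (R 1) ^ (-β1⁻¹))
    (k : ℝ) (m1 : T) (hm1 : m1 ≠ 0) (s1 : ℕ) (hs1 : 1 ≤ s1)
    (hm1hi : nrm m1 ≤ 12 * R s1)
    (hres : |k - (-(ξ m1) / 2)| < (δ' s1) ^ ((3 : ℝ) / 4)) :
    (δ' (s1 - 1)) ^ ((1 : ℝ) / 16) < |ξ m1| ∧
    (δ' (s1 - 1)) ^ ((1 : ℝ) / 16) / 2 < |k| ∧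
    Real.sign k = -Real.sign (ξ m1) := by
  have hb0one : 1 < b0 := hν.trans hb0
  have hR1 : 0 < R 1 := lt_of_lt_of_le (by positivity) hR1a
  have hR1s1 : R 1 ≤ R s1 :=
    Nat.le_induction le_rfl (fun n hn ih => ih.trans (hRmono n hn).le) s1 hs1
  have hRs1 : 0 < R s1 := hR1.trans_le hR1s1
  have hlog : 2 ^ 34 * (32 * b0) ≤ Real.log (R s1) := by
    rw [hβ1, inv_inv] at hR1big
    exact hR1big.trans (log_le_log hR1 hR1s1)
  have hnrm : 0 < nrm m1 := (hpos m1).lt_of_ne' fun h => hm1 ((hzero m1).mp h)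
  set D := R s1 ^ (-(2 * b0))
  have hD : 0 < D := rpow_pos_of_pos hRs1 _
  have hwindow : δ' s1 ^ (3 / 4 : ℝ) < D := by
    rw [hδ s1 hs1]
    exact exp_neg_sq_rpow_lt_rpow hRs1 (by linarith) (by linarith)
  have hξ : 4 * D < |ξ m1| :=
    four_mul_lt_of_diophantine ha0 hb0one.le hnrm hm1hi (hdioph m1 hm1) (hRbig s1 hs1)
  rw [prev_delta_rpow_eq (by linarith) hβ1 hRrec hδ hδ0 hs1 hRs1]
  refine ⟨by linarith, by linarith [half_abs_sub_lt_abs hres], ?_⟩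
  exact sign_eq_neg_sign_of_abs_sub_lt hres (by linarith)

/-- Lemma on resonances, parts (1)–(2): if `k` is resonant with `m₁`
(`|k - k_{m₁}| < (δ^{(s₁)})^{3/4}` with `12 R^{(s₁-1)} < |m₁| ≤ 12 R^{(s₁)}`), then
`|ξ(m₁)| > (δ^{(s₁-1)})^{1/16}`, `|k| > (δ^{(s₁-1)})^{1/16}/2`, and `k` and `ξ(m₁)` have
opposite signs. -/
theorem resonance_structure {T : Type*} [AddCommGroup T] (nrm : T → ℝ)
    (hpos : ∀ m : T, 0 ≤ nrm m) (hzero : ∀ m : T, nrm m = 0 ↔ m = 0)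
    (htri : ∀ m n : T, nrm (m + n) ≤ nrm m + nrm n)
    (ξ : T → ℝ) (hadd : ∀ a b : T, ξ (a + b) = ξ a + ξ b)
    (hξbound : ∀ n : T, |ξ n| ≤ nrm n)
    (a0 b0 ν : ℝ) (ha0 : 0 < a0) (ha1 : a0 < 1) (hν : 1 < ν) (hb0 : ν < b0)
    (hdioph : ∀ n : T, n ≠ 0 → a0 * nrm n ^ (-b0) ≤ |ξ n|)
    (β1 : ℝ) (hβ1 : β1 = (32 * b0)⁻¹)
    (R δ' : ℕ → ℝ) (hR0 : R 0 = 0)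
    (hRmono : ∀ u : ℕ, 1 ≤ u → R u < R (u + 1))
    (hRrec : ∀ u : ℕ, 2 ≤ u → Real.log (R u) = β1 * (Real.log (R (u - 1))) ^ 2)
    (hR1a : 100 * a0⁻¹ ≤ R 1)
    (hR1big : 2 ^ 34 * β1⁻¹ ≤ Real.log (R 1))
    (hRbig : ∀ u : ℕ, 1 ≤ u → (R u) ^ (-(2 * b0)) < a0 * (48 * R u) ^ (-b0))
    (hδ : ∀ u : ℕ, 1 ≤ u → δ' u = Real.exp (-(Real.log (R u)) ^ 2))
    (hδ0 : δ' 0 = (R 1) ^ (-β1⁻¹))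
    (k : ℝ) (m1 : T) (hm1 : m1 ≠ 0) (s1 : ℕ) (hs1 : 1 ≤ s1)
    (hm1lo : 12 * R (s1 - 1) < nrm m1) (hm1hi : nrm m1 ≤ 12 * R s1)
    (hres : |k - (-(ξ m1) / 2)| < (δ' s1) ^ ((3 : ℝ) / 4)) :
    (δ' (s1 - 1)) ^ ((1 : ℝ) / 16) < |ξ m1| ∧
    (δ' (s1 - 1)) ^ ((1 : ℝ) / 16) / 2 < |k| ∧
    Real.sign k = -Real.sign (ξ m1) :=
  resonance_structure_general nrm hpos hzero ξ a0 b0 ν ha0 hν hb0 hdioph β1 hβ1 R δ' hRmono hRrec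
    hR1a hR1big hRbig hδ hδ0 k m1 hm1 s1 hs1 hm1hi hres
end
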